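/- arXiv:2512.15912 — 5 statements merged into one kernel-verified Lean document; each statement's English description precedes it below -/
import Mathlib

section
/- For metric spaces (X,ρ) and (Y,d), a function f : X → Y is weakly separated if and only if f has the Lee–Tang–Zhao property. -/
/-- A neighborhood assignment: to each point an open set containing it. -/
def NbhdAssignment {X : Type*} [TopologicalSpace X] (V : X → Set X) : Prop :=
  ∀ x, IsOpen (V x) ∧ x ∈ V x

/-- `f` is weakly separated. -/
def WeaklySeparated {X Y : Type*} [TopologicalSpace X] [MetricSpace Y] (f : X → Y) : Prop :=
  ∀ ε > (0 : ℝ), ∃ V : X → Set X, NbhdAssignment V ∧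
    ∀ x y, x ∈ V y → y ∈ V x → dist (f x) (f y) < ε

/-- `f` has the Lee–Tang–Zhao property. -/
def LTZProperty {X Y : Type*} [MetricSpace X] [MetricSpace Y] (f : X → Y) : Prop :=
  ∀ ε > (0 : ℝ), ∃ δ : X → ℝ, (∀ x, 0 < δ x) ∧
    ∀ x y, dist x y < min (δ x) (δ y) → dist (f x) (f y) < ε

theorem weaklySeparated_iff_ltz {X Y : Type*} [MetricSpace X] [MetricSpace Y]
    (f : X → Y) : WeaklySeparated f ↔ LTZProperty f := by
  constructor
  · intro h ε hε
    obtain ⟨V, hV, hvf⟩ := h ε hε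
    have hr : ∀ x, ∃ r > (0:ℝ), Metric.ball x r ⊆ V x := fun x =>
      Metric.isOpen_iff.1 (hV x).1 x (hV x).2
    choose δ hδpos hδsub using hr
    refine ⟨δ, hδpos, fun x y hxy => ?_⟩
    have h1 : y ∈ V x := hδsub x (by rw [Metric.mem_ball, dist_comm]; exact lt_of_lt_of_le hxy (min_le_left _ _))
    have h2 : x ∈ V y := hδsub y (by rw [Metric.mem_ball]; exact lt_of_lt_of_le hxy (min_le_right _ _))
    exact hvf x y h2 h1
  · intro h ε hε
    obtain ⟨δ, hδpos, hδf⟩ := h ε hε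
    refine ⟨fun x => Metric.ball x (δ x), fun x => ⟨Metric.isOpen_ball, Metric.mem_ball_self (hδpos x)⟩,
      fun x y hxy hyx => ?_⟩
    exact hδf x y (lt_min (by rwa [Metric.mem_ball, dist_comm] at hyx) (by rwa [Metric.mem_ball] at hxy))
end

section
/- Let X be a topological space that is not a Baire space. Then there exist a nonempty open set U ⊆ X and a fragmentable function f : X → ℝ with range contained in {1/n : n ∈ ℕ} such that f has no point of continuity in U. -/
/-- `f` is fragmentable. -/
def Fragmentable {X Y : Type*} [TopologicalSpace X] [MetricSpace Y] (f : X → Y) : Prop :=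
  ∀ ε > (0 : ℝ), ∀ F : Set X, IsClosed F → F.Nonempty →
    ∃ U : Set X, IsOpen U ∧ (U ∩ F).Nonempty ∧ Metric.diam (f '' (U ∩ F)) < ε

theorem exists_fragmentable_nowhere_continuous_of_not_baire
    {X : Type*} [TopologicalSpace X] (hX : ¬ BaireSpace X) :
    ∃ (U : Set X) (f : X → ℝ), IsOpen U ∧ U.Nonempty ∧ Fragmentable f ∧
      (Set.range f ⊆ {y : ℝ | ∃ n : ℕ, y = 1 / (n + 1)}) ∧
      ∀ x ∈ U, ¬ ContinuousAt f x := by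
  classical
  obtain ⟨g, hgo, hgd, hgnd⟩ :
      ∃ g : ℕ → Set X, (∀ n, IsOpen (g n)) ∧ (∀ n, Dense (g n)) ∧ ¬ Dense (⋂ n, g n) := by
    by_contra h
    push_neg at h
    exact hX ⟨fun g ho hd => h g ho hd⟩
  rw [dense_iff_inter_open] at hgnd
  push_neg at hgnd
  obtain ⟨U, hUo, hUne, hUdisj⟩ := hgnd
  have hUsub : ∀ x ∈ U, ∃ n, x ∉ g n := by
    intro x hx
    by_contra hc
    push_neg at hc
    have hxmem : x ∈ U ∩ ⋂ n, g n := ⟨hx, Set.mem_iInter.2 hc⟩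
    rw [hUdisj] at hxmem
    exact hxmem
  -- the increasing family of closed sets
  set E : ℕ → Set X := fun n => Uᶜ ∪ ⋃ k ∈ Set.Iic n, (g k)ᶜ with hEdef
  have hEclosed : ∀ n, IsClosed (E n) := by
    intro n
    exact (isClosed_compl_iff.2 hUo).union
      ((Set.finite_Iic n).isClosed_biUnion fun k _ => (hgo k).isClosed_compl)
  have hEmono : Monotone E := by
    intro a b hab
    apply Set.union_subset_union_right
    exact Set.biUnion_subset_biUnion_left (Set.Iic_subset_Iic.2 hab)
  have hEex : ∀ x, ∃ n, x ∈ E n := by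
    intro x
    by_cases hx : x ∈ U
    · obtain ⟨n, hn⟩ := hUsub x hx
      exact ⟨n, Or.inr (Set.mem_biUnion (Set.mem_Iic.2 le_rfl) hn)⟩
    · exact ⟨0, Or.inl hx⟩
  set r : X → ℕ := fun x => Nat.find (hEex x) with hrdef
  set f : X → ℝ := fun x => 1 / (r x + 1) with hfdef
  have hfval : ∀ x, f x = 1 / (r x + 1) := fun x => rfl
  have hrE : ∀ x, x ∈ E (r x) := fun x => Nat.find_spec (hEex x)
  have hrmin : ∀ x m, m < r x → x ∉ E m := fun x m hm => Nat.find_min (hEex x) hm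
  have hrle : ∀ x n, x ∈ E n → r x ≤ n := fun x n hx => Nat.find_le hx
  -- value formula on levels
  have hreq : ∀ x n, x ∈ E n → (n = 0 ∨ x ∉ E (n - 1)) → r x = n := by
    intro x n hx h
    refine le_antisymm (hrle x n hx) ?_
    rcases h with h | h
    · omega
    · by_contra hc
      push_neg at hc
      exact h (hEmono (by omega) (hrE x))
  have hfle : ∀ x n, x ∉ E n → f x ≤ 1 / (n + 2) := by
    intro x n hx
    have hr : n + 1 ≤ r x := by
      by_contra hc
      push_neg at hc
      exact hx (hEmono (by omega) (hrE x))
    rw [hfval]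
    apply one_div_le_one_div_of_le (by positivity)
    have : (n : ℝ) + 1 ≤ (r x : ℝ) := by exact_mod_cast hr
    linarith
  have hfpos : ∀ x, 0 < f x := by
    intro x
    rw [hfval]
    positivity
  -- dense open finite intersections
  have hDo : ∀ n, IsOpen (⋂ k ∈ Set.Iic n, g k) := fun n =>
    (Set.finite_Iic n).isOpen_biInter fun k _ => hgo k
  have hDd : ∀ n, Dense (⋂ k ∈ Set.Iic n, g k) := by
    intro n
    induction n with
    | zero => simpa using hgd 0
    | succ m ih =>
      have heq : (⋂ k ∈ Set.Iic (m + 1), g k) = (⋂ k ∈ Set.Iic m, g k) ∩ g (m + 1) := by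
        ext x
        simp only [Set.mem_iInter, Set.mem_inter_iff, Set.mem_Iic]
        constructor
        · intro h; exact ⟨fun k hk => h k (by omega), h (m + 1) le_rfl⟩
        · rintro ⟨h1, h2⟩ k hk
          rcases Nat.lt_or_ge k (m + 1) with h | h
          · exact h1 k (by omega)
          · have : k = m + 1 := by omega
            subst this; exact h2
      rw [heq]
      exact ih.inter_of_isOpen_left (hgd (m + 1)) (hDo m)
  -- membership in the dense set avoids E n (within U)
  have hnotE : ∀ n, ∀ x ∈ U, x ∈ (⋂ k ∈ Set.Iic n, g k) → x ∉ E n := by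
    intro n x hxU hxD hxE
    rcases hxE with h | h
    · exact h hxU
    · obtain ⟨k, hk, hxk⟩ := Set.mem_iUnion₂.1 h
      exact hxk (Set.mem_iInter₂.1 hxD k hk)
  refine ⟨U, f, hUo, hUne, ?_, ?_, ?_⟩
  · -- Fragmentable
    intro ε hε F hFc hFne
    set P : ℕ → Prop := fun n => ∃ W, IsOpen W ∧ (W ∩ F).Nonempty ∧ W ∩ F ⊆ E n with hPdef
    obtain ⟨N, hN⟩ := exists_nat_one_div_lt hε
    by_cases hP : ∃ n, P n
    · set n₀ := Nat.find hP with hn₀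
      obtain ⟨W, hWo, hWne, hWsub⟩ := Nat.find_spec hP
      rcases Nat.eq_zero_or_pos n₀ with h0 | hpos
      · refine ⟨W, hWo, hWne, ?_⟩
        have hsub : (f '' (W ∩ F)).Subsingleton := by
          rintro a ⟨x, hx, rfl⟩ b ⟨y, hy, rfl⟩
          have hx0 : r x = 0 := hreq x 0 (h0 ▸ hWsub hx) (Or.inl rfl)
          have hy0 : r y = 0 := hreq y 0 (h0 ▸ hWsub hy) (Or.inl rfl)
          rw [hfval, hfval, hx0, hy0]
        rw [Metric.diam_subsingleton hsub]
        exact hε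
      · obtain ⟨m, hm⟩ : ∃ m, n₀ = m + 1 := ⟨n₀ - 1, by omega⟩
        have hnotPm : ¬ P m := Nat.find_min hP (by omega)
        have hyex : ∃ y ∈ W ∩ F, y ∉ E m := by
          by_contra hc
          push_neg at hc
          exact hnotPm ⟨W, hWo, hWne, hc⟩
        obtain ⟨y, hyWF, hyE⟩ := hyex
        refine ⟨W ∩ (E m)ᶜ, hWo.inter (hEclosed m).isOpen_compl,
          ⟨y, ⟨hyWF.1, hyE⟩, hyWF.2⟩, ?_⟩
        have hsub : (f '' (W ∩ (E m)ᶜ ∩ F)).Subsingleton := by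
          rintro a ⟨x, hx, rfl⟩ b ⟨z, hz, rfl⟩
          have hrx : r x = m + 1 :=
            hreq x (m + 1) (hm ▸ hWsub ⟨hx.1.1, hx.2⟩) (Or.inr (by simpa using hx.1.2))
          have hrz : r z = m + 1 :=
            hreq z (m + 1) (hm ▸ hWsub ⟨hz.1.1, hz.2⟩) (Or.inr (by simpa using hz.1.2))
          rw [hfval, hfval, hrx, hrz]
        rw [Metric.diam_subsingleton hsub]
        exact hε
    · -- no relative interior anywhere: use the complement of E N
      have hnotPN : ¬ P N := fun h => hP ⟨N, h⟩
      have hyex : ∃ y ∈ F, y ∉ E N := by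
        by_contra hc
        push_neg at hc
        exact hnotPN ⟨Set.univ, isOpen_univ, by simpa using hFne,
          by intro x hx; exact hc x hx.2⟩
      obtain ⟨y, hyF, hyE⟩ := hyex
      refine ⟨(E N)ᶜ, (hEclosed N).isOpen_compl, ⟨y, hyE, hyF⟩, ?_⟩
      have hbound : Metric.diam (f '' ((E N)ᶜ ∩ F)) ≤ 1 / (N + 2) := by
        apply Metric.diam_le_of_forall_dist_le (by positivity)
        rintro a ⟨x, hx, rfl⟩ b ⟨z, hz, rfl⟩
        have h1 := hfle x N hx.1
        have h2 := hfle z N hz.1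
        have h3 := hfpos x
        have h4 := hfpos z
        rw [Real.dist_eq, abs_sub_le_iff]
        constructor <;> linarith
      calc Metric.diam (f '' ((E N)ᶜ ∩ F)) ≤ 1 / (N + 2) := hbound
        _ ≤ 1 / (N + 1) := by
            apply one_div_le_one_div_of_le (by positivity)
            linarith
        _ < ε := hN
  · -- range
    rintro y ⟨x, rfl⟩
    exact ⟨r x, by rw [hfval]⟩
  · -- no continuity point in U
    intro x hxU hc
    set n := r x with hn
    set δ : ℝ := 1 / (n + 1) - 1 / (n + 2) with hδ
    have hδpos : 0 < δ := by
      rw [hδ]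
      have h1 : (0:ℝ) < n + 1 := by positivity
      have h2 : (0:ℝ) < n + 2 := by positivity
      rw [sub_pos]
      apply one_div_lt_one_div_of_lt h1
      linarith
    have hball := hc (Metric.ball_mem_nhds (f x) hδpos)
    obtain ⟨V, hVsub, hVo, hxV⟩ := mem_nhds_iff.1 hball
    have hVU : IsOpen (V ∩ U) := hVo.inter hUo
    have hVUne : (V ∩ U).Nonempty := ⟨x, hxV, hxU⟩
    obtain ⟨y, hyD, hyVU⟩ := (hDd n).exists_mem_open hVU hVUne
    have hyE : y ∉ E n := hnotE n y hyVU.2 hyD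
    have hfy : f y ≤ 1 / (n + 2) := hfle y n hyE
    have hfxval : f x = 1 / (n + 1) := by rw [hfval]
    have hdist : dist (f y) (f x) < δ := hVsub hyVU.1
    rw [Real.dist_eq] at hdist
    have : f x - f y ≤ |f y - f x| := by
      rw [abs_sub_comm]
      exact le_abs_self _
    rw [hfxval] at this
    have := hfpos y
    simp only [hδ] at hdist
    linarith [hdist, hfy]
end

section
/- There exists a function f : ℝ → ℝ which is cliquish but whose restriction to the Cantor set is not Borel 1; in particular f itself is not Borel 1 and not fragmentable. Concretely, the characteristic function of the set of endpoints of the intervals removed in the construction of the Cantor set is such a function. -/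
/-- `f` is cliquish. -/
def Cliquish {X Y : Type*} [TopologicalSpace X] [MetricSpace Y] (f : X → Y) : Prop :=
  ∀ ε > (0 : ℝ), ∀ U : Set X, IsOpen U → U.Nonempty →
    ∃ O : Set X, IsOpen O ∧ O.Nonempty ∧ O ⊆ U ∧ Metric.diam (f '' O) < ε

/-- A set is Fσ: a countable union of closed sets. -/
def IsFSigma {X : Type*} [TopologicalSpace X] (s : Set X) : Prop :=
  ∃ F : ℕ → Set X, (∀ n, IsClosed (F n)) ∧ s = ⋃ n, F n

/-- `f` is Borel 1: preimages of open sets are Fσ. -/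
def Borel1 {X Y : Type*} [TopologicalSpace X] [TopologicalSpace Y] (f : X → Y) : Prop :=
  ∀ V : Set Y, IsOpen V → IsFSigma (f ⁻¹' V)

namespace CliquishAux


noncomputable section
open Finset

noncomputable def tv (b : Bool) : ℝ := if b then 2 else 0

lemma tv_nonneg (b : Bool) : 0 ≤ tv b := by unfold tv; split <;> norm_num
lemma tv_le (b : Bool) : tv b ≤ 2 := by unfold tv; split <;> norm_num

def trm (x : ℕ → Bool) (n : ℕ) : ℝ := tv (x n) * (1/3)^(n+1)

lemma trm_nonneg (x : ℕ → Bool) (n : ℕ) : 0 ≤ trm x n :=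
  mul_nonneg (tv_nonneg _) (by positivity)

lemma trm_le (x : ℕ → Bool) (n : ℕ) : trm x n ≤ 2 * (1/3)^(n+1) :=
  mul_le_mul_of_nonneg_right (tv_le _) (by positivity)

lemma summable_geo : Summable (fun n : ℕ => 2 * (1/3:ℝ)^(n+1)) := by
  apply Summable.mul_left
  exact ((summable_geometric_of_lt_one (by norm_num) (by norm_num)).comp_injective
    (add_left_injective 1))

lemma summable_trm (x : ℕ → Bool) : Summable (trm x) :=
  Summable.of_nonneg_of_le (trm_nonneg x) (trm_le x) summable_geo

def gg (x : ℕ → Bool) : ℝ := ∑' n, trm x n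

def tail (x : ℕ → Bool) (k : ℕ) : ℝ := ∑' n, trm x (n + k)

lemma tail_nonneg (x : ℕ → Bool) (k : ℕ) : 0 ≤ tail x k :=
  tsum_nonneg (fun n => trm_nonneg x _)

lemma tsum_geo_shift (k : ℕ) : ∑' n : ℕ, 2 * (1/3:ℝ)^(n + k + 1) = (1/3)^k := by
  have : ∀ n : ℕ, 2 * (1/3:ℝ)^(n+k+1) = (2 * (1/3)^(k+1)) * (1/3)^n := by
    intro n; ring
  rw [tsum_congr this, tsum_mul_left, tsum_geometric_of_lt_one (by norm_num) (by norm_num)]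
  ring_nf

lemma tail_le (x : ℕ → Bool) (k : ℕ) : tail x k ≤ (1/3)^k := by
  rw [← tsum_geo_shift k]
  exact Summable.tsum_le_tsum (fun n => trm_le x (n+k))
    ((summable_trm x).comp_injective (add_left_injective k))
    (summable_geo.comp_injective (add_left_injective k))

lemma gg_split (x : ℕ → Bool) (k : ℕ) :
    gg x = (∑ n ∈ Finset.range k, trm x n) + tail x k :=
  (Summable.sum_add_tsum_nat_add k (summable_trm x)).symm

lemma tail_split (x : ℕ → Bool) (k : ℕ) :
    tail x k = trm x k + tail x (k+1) := by
  have h := Summable.sum_add_tsum_nat_add (f := fun n => trm x (n + k)) 1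
    ((summable_trm x).comp_injective (add_left_injective k))
  rw [tail, ← h, Finset.sum_range_one]
  simp only [zero_add]
  congr 1
  · exact tsum_congr fun n => by congr 1; omega

lemma gg_diff (x y : ℕ → Bool) (k : ℕ) (h : ∀ n < k, x n = y n) :
    gg x - gg y = tail x k - tail y k := by
  rw [gg_split x k, gg_split y k]
  have : ∑ n ∈ Finset.range k, trm x n = ∑ n ∈ Finset.range k, trm y n :=
    Finset.sum_congr rfl fun n hn => by
      rw [trm, trm, h n (Finset.mem_range.mp hn)]
  rw [this]; ring

lemma gg_close (x y : ℕ → Bool) (k : ℕ) (h : ∀ n < k, x n = y n) :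
    |gg x - gg y| ≤ (1/3)^k := by
  rw [gg_diff x y k h]
  rw [abs_sub_le_iff]
  constructor
  · linarith [tail_le x k, tail_nonneg y k]
  · linarith [tail_le y k, tail_nonneg x k]

lemma gg_sep (x y : ℕ → Bool) (j : ℕ) (h : ∀ n < j, x n = y n) (hj : x j ≠ y j) :
    (1/3:ℝ)^(j+1) ≤ |gg x - gg y| := by
  have hd := gg_diff x y j h
  rw [tail_split x j, tail_split y j] at hd
  have htv : |trm x j - trm y j| = 2 * (1/3)^(j+1) := by
    rw [trm, trm]
    rcases Bool.eq_false_or_eq_true (x j) with hx | hx <;>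
      rcases Bool.eq_false_or_eq_true (y j) with hy | hy <;>
        simp [hx, hy, tv] at hj ⊢ <;> rw [abs_of_nonneg (by positivity)] <;> ring
  have h2 : |tail x (j+1) - tail y (j+1)| ≤ (1/3)^(j+1) := by
    rw [abs_sub_le_iff]
    constructor
    · linarith [tail_le x (j+1), tail_nonneg y (j+1)]
    · linarith [tail_le y (j+1), tail_nonneg x (j+1)]
  have := abs_sub_abs_le_abs_sub (trm x j - trm y j) (tail y (j+1) - tail x (j+1))
  have heq : trm x j - trm y j - (tail y (j+1) - tail x (j+1)) = gg x - gg y := by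
    rw [hd]; ring
  rw [heq, htv, abs_sub_comm (tail y (j+1))] at this
  linarith


lemma continuous_gg : Continuous gg := by
  apply continuous_tsum (u := fun n => 2 * (1/3:ℝ)^(n+1))
  · intro n
    have h1 : Continuous fun x : ℕ → Bool => tv (x n) :=
      Continuous.comp (continuous_of_discreteTopology (f := tv)) (continuous_apply n)
    exact h1.mul continuous_const
  · apply Summable.mul_left
    exact ((summable_geometric_of_lt_one (by norm_num) (by norm_num)).comp_injective
      (add_left_injective 1))
  · intro n x
    rw [Real.norm_eq_abs, trm, abs_of_nonneg (mul_nonneg (tv_nonneg _) (by positivity))]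
    exact mul_le_mul_of_nonneg_right (by unfold tv; split <;> norm_num) (by positivity)

def Cs : Set ℝ := Set.range gg

lemma isClosed_Cs : IsClosed Cs :=
  (isCompact_range continuous_gg).isClosed

-- injectivity
lemma gg_inj : Function.Injective gg := by
  intro x y hxy
  by_contra hne
  have hex : ∃ n, x n ≠ y n := by
    by_contra h
    push_neg at h
    exact hne (funext h)
  classical
  let j := Nat.find hex
  have h1 : ∀ n < j, x n = y n := fun n hn => by
    by_contra h
    exact Nat.find_min hex hn h
  have := gg_sep x y j h1 (Nat.find_spec hex)
  rw [hxy, sub_self, abs_zero] at this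
  have : (0:ℝ) < (1/3)^(j+1) := by positivity
  linarith

def trunc (x : ℕ → Bool) (k : ℕ) : ℕ → Bool := fun n => if n < k then x n else false
def ext1 (x : ℕ → Bool) (k : ℕ) : ℕ → Bool := fun n => if n < k then x n else true

def Es : Set (ℕ → Bool) := {x | ∃ k, ∀ n, k ≤ n → x n = false}

lemma trunc_mem (x : ℕ → Bool) (k : ℕ) : trunc x k ∈ Es :=
  ⟨k, fun n hn => by simp [trunc, Nat.not_lt.mpr hn]⟩

lemma ext1_notMem (x : ℕ → Bool) (k : ℕ) : ext1 x k ∉ Es := by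
  rintro ⟨m, hm⟩
  have := hm (max m k) (le_max_left m k)
  simp [ext1, Nat.not_lt.mpr (le_max_right m k)] at this

lemma countable_Es : Es.Countable := by
  have : Es ⊆ ⋃ k : ℕ, Set.range (fun v : Fin k → Bool =>
      (fun n => if h : n < k then v ⟨n, h⟩ else false : ℕ → Bool)) := by
    rintro x ⟨k, hk⟩
    refine Set.mem_iUnion.mpr ⟨k, ⟨fun i => x i, funext fun n => ?_⟩⟩
    by_cases h : n < k
    · simp [h]
    · simp [h, hk n (Nat.not_lt.mp h)]
  exact Set.Countable.mono this (Set.countable_iUnion fun k => Set.countable_range _)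

def As : Set ℝ := gg '' Es

lemma countable_As : As.Countable := countable_Es.image gg

lemma As_subset_Cs : As ⊆ Cs := Set.image_subset_range gg Es

-- tail of trunc is zero
lemma tail_trunc (x : ℕ → Bool) (k : ℕ) : tail (trunc x k) k = 0 := by
  have : ∀ n : ℕ, trm (trunc x k) (n + k) = 0 := by
    intro n
    have : trunc x k (n + k) = false := by simp [trunc]
    rw [trm, this]
    simp [tv]
  rw [tail, tsum_congr this, tsum_zero]

-- key: midpoint not in Cs
lemma mid_not_mem (x : ℕ → Bool) (k : ℕ) :
    gg (trunc x k) + (3/2) * (1/3)^(k+1) ∉ Cs := by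
  rintro ⟨y, hy⟩
  classical
  by_cases hcase : ∀ n < k, y n = trunc x k n
  · have hd := gg_diff y (trunc x k) k hcase
    rw [tail_trunc, tail_split y k, sub_zero] at hd
    have hy' : gg y - gg (trunc x k) = (3/2) * (1/3)^(k+1) := by rw [hy]; ring
    rw [hy'] at hd
    have ht1 := tail_nonneg y (k+1)
    have ht2 := tail_le y (k+1)
    have hpow : ((1:ℝ)/3)^(k+1) = ((3:ℝ)^(k+1))⁻¹ := by rw [one_div, inv_pow]
    rw [hpow] at ht2
    rcases Bool.eq_false_or_eq_true (y k) with h | h <;> rw [trm, h] at hd <;>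
        simp [tv, hpow] at hd <;>
      nlinarith [pow_pos (by norm_num : (0:ℝ) < (3:ℝ)) (k+1),
        inv_pos.mpr (pow_pos (by norm_num : (0:ℝ) < (3:ℝ)) (k+1))]
  · push_neg at hcase
    have hex : ∃ n, y n ≠ trunc x k n := ⟨hcase.choose, hcase.choose_spec.2⟩
    let j := Nat.find hex
    have hjk : j < k := lt_of_le_of_lt (Nat.find_le hcase.choose_spec.2) hcase.choose_spec.1
    have hagree : ∀ n < j, y n = trunc x k n := fun n hn => by
      by_contra h; exact Nat.find_min hex hn h
    have hsep := gg_sep y (trunc x k) j hagree (Nat.find_spec hex)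
    have hy' : gg y - gg (trunc x k) = (3/2) * (1/3)^(k+1) := by rw [hy]; ring
    rw [hy'] at hsep
    rw [abs_of_nonneg (by positivity)] at hsep
    have hle : (1/3:ℝ)^k ≤ (1/3)^(j+1) :=
      pow_le_pow_of_le_one (by norm_num) (by norm_num) (by omega)
    have : (1/3:ℝ)^k = 3 * (1/3)^(k+1) := by rw [pow_succ]; ring
    nlinarith [pow_pos (by norm_num : (0:ℝ) < 1/3) (k+1)]

lemma interior_Cs : interior Cs = ∅ := by
  by_contra h
  obtain ⟨z, hz⟩ := Set.nonempty_iff_ne_empty.mpr h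
  obtain ⟨ε, hε, hball⟩ := Metric.isOpen_iff.mp isOpen_interior z hz
  obtain ⟨x, hx⟩ := interior_subset hz
  obtain ⟨k, hk⟩ := exists_pow_lt_of_lt_one (div_pos hε (by norm_num : (0:ℝ) < 2))
    (by norm_num : (1/3:ℝ) < 1)
  set m := gg (trunc x k) + (3/2) * (1/3)^(k+1) with hm
  have hclose : |gg x - gg (trunc x k)| ≤ (1/3)^k :=
    gg_close x (trunc x k) k (fun n hn => by simp [trunc, hn])
  have hdist : dist m z < ε := by
    rw [← hx, Real.dist_eq, hm]
    have h1 : (3/2:ℝ) * (1/3)^(k+1) ≤ (1/2) * (1/3)^k := by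
      rw [pow_succ]; nlinarith [pow_pos (by norm_num : (0:ℝ) < 1/3) k]
    calc |gg (trunc x k) + 3/2 * (1/3)^(k+1) - gg x|
        ≤ |gg (trunc x k) - gg x| + |(3/2:ℝ) * (1/3)^(k+1)| := by
          have := abs_add_le (gg (trunc x k) - gg x) ((3/2) * (1/3)^(k+1))
          calc _ = |gg (trunc x k) - gg x + 3/2 * (1/3)^(k+1)| := by ring_nf
            _ ≤ _ := this
      _ ≤ (1/3)^k + (1/2) * (1/3)^k := by
          rw [abs_sub_comm] at hclose
          rw [abs_of_nonneg (by positivity : (0:ℝ) ≤ (3/2) * (1/3)^(k+1))]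
          linarith
      _ < ε := by nlinarith [hk]
  exact mid_not_mem x k (interior_subset (hball (Metric.mem_ball.mpr hdist)))

-- densities
lemma dense_As : ∀ z ∈ Cs, ∀ ε > (0:ℝ), ∃ a ∈ As, |z - a| < ε := by
  rintro z ⟨x, rfl⟩ ε hε
  obtain ⟨k, hk⟩ := exists_pow_lt_of_lt_one hε (by norm_num : (1/3:ℝ) < 1)
  refine ⟨gg (trunc x k), ⟨trunc x k, trunc_mem x k, rfl⟩, ?_⟩
  exact lt_of_le_of_lt (gg_close x (trunc x k) k (fun n hn => by simp [trunc, hn])) hk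

lemma dense_Cs_diff_As : ∀ z ∈ Cs, ∀ ε > (0:ℝ), ∃ b ∈ Cs \ As, |z - b| < ε := by
  rintro z ⟨x, rfl⟩ ε hε
  obtain ⟨k, hk⟩ := exists_pow_lt_of_lt_one hε (by norm_num : (1/3:ℝ) < 1)
  refine ⟨gg (ext1 x k), ⟨⟨ext1 x k, rfl⟩, ?_⟩, ?_⟩
  · rintro ⟨w, hw, hww⟩
    exact ext1_notMem x k (gg_inj hww ▸ hw)
  · exact lt_of_le_of_lt (gg_close x (ext1 x k) k (fun n hn => by simp [ext1, hn])) hk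


lemma As_nonempty : As.Nonempty :=
  ⟨gg (fun _ => false), ⟨fun _ => false, ⟨0, fun _ _ => rfl⟩, rfl⟩⟩

-- Baire category core lemma
lemma no_cover (F : ℕ → Set ↥Cs) (hF : ∀ n, IsClosed (F n))
    (hEq : {c : ↥Cs | (c : ℝ) ∉ As} = ⋃ n, F n) : False := by
  have : CompleteSpace ↥Cs := isClosed_Cs.completeSpace_coe
  have hCsne : Nonempty ↥Cs := ⟨⟨As_nonempty.choose, As_subset_Cs As_nonempty.choose_spec⟩⟩
  obtain ⟨u, hu⟩ := countable_As.exists_eq_range As_nonempty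
  set G : ℕ ⊕ ℕ → Set ↥Cs := Sum.elim F (fun n => {c : ↥Cs | (c : ℝ) = u n}) with hG
  have hGcl : ∀ i, IsClosed (G i) := by
    rintro (n | n)
    · exact hF n
    · exact IsClosed.preimage continuous_subtype_val isClosed_singleton
  have hGuniv : ⋃ i, G i = Set.univ := by
    ext c
    simp only [Set.mem_univ, iff_true, Set.mem_iUnion]
    by_cases hc : (c : ℝ) ∈ As
    · rw [hu] at hc
      obtain ⟨n, hn⟩ := hc
      exact ⟨Sum.inr n, hn.symm⟩
    · have : c ∈ ⋃ n, F n := hEq ▸ hc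
      obtain ⟨n, hn⟩ := Set.mem_iUnion.mp this
      exact ⟨Sum.inl n, hn⟩
  obtain ⟨i, c, hc⟩ := nonempty_interior_of_iUnion_of_closed hGcl hGuniv
  obtain ⟨ε, hε, hball⟩ := Metric.isOpen_iff.mp isOpen_interior c hc
  cases i with
  | inl n =>
    obtain ⟨a, haA, hadist⟩ := dense_As (c : ℝ) c.2 ε hε
    have haC : a ∈ Cs := As_subset_Cs haA
    have : (⟨a, haC⟩ : ↥Cs) ∈ Metric.ball c ε := by
      rw [Metric.mem_ball, Subtype.dist_eq, Real.dist_eq, abs_sub_comm]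
      exact hadist
    have hmem : (⟨a, haC⟩ : ↥Cs) ∈ F n := interior_subset (hball this)
    have : (⟨a, haC⟩ : ↥Cs) ∈ ⋃ m, F m := Set.mem_iUnion.mpr ⟨n, hmem⟩
    rw [← hEq] at this
    exact this haA
  | inr n =>
    obtain ⟨b, hbA, hbdist⟩ := dense_Cs_diff_As (c : ℝ) c.2 ε hε
    have : (⟨b, hbA.1⟩ : ↥Cs) ∈ Metric.ball c ε := by
      rw [Metric.mem_ball, Subtype.dist_eq, Real.dist_eq, abs_sub_comm]
      exact hbdist
    have hmem : (⟨b, hbA.1⟩ : ↥Cs) ∈ G (Sum.inr n) := interior_subset (hball this)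
    have : b ∈ As := by
      rw [hu]
      exact ⟨n, hmem.symm⟩
    exact hbA.2 this

theorem exists_cliquish_not_borel1 :
    ∃ (f : ℝ → ℝ) (C : Set ℝ), IsClosed C ∧ Cliquish f ∧
      ¬ Borel1 (C.restrict f) ∧ ¬ Borel1 f ∧ ¬ Fragmentable f := by
  classical
  set f : ℝ → ℝ := As.indicator (fun _ => 1) with hf
  have hf_val : ∀ z, f z = if z ∈ As then 1 else 0 := fun z => Set.indicator_apply _ _ _
  have hpre : ∀ z, f z < 1/2 ↔ z ∉ As := by
    intro z
    rw [hf_val]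
    split <;> simp_all <;> norm_num
  refine ⟨f, Cs, isClosed_Cs, ?_, ?_, ?_, ?_⟩
  · -- Cliquish
    intro ε hε U hU hUne
    refine ⟨U ∩ Csᶜ, hU.inter isClosed_Cs.isOpen_compl, ?_, Set.inter_subset_left, ?_⟩
    · by_contra h
      rw [Set.not_nonempty_iff_eq_empty] at h
      have hsub : U ⊆ Cs := by
        intro z hz
        by_contra hzc
        have : z ∈ U ∩ Csᶜ := ⟨hz, hzc⟩
        rw [h] at this
        exact this
      have := interior_maximal hsub hU
      rw [interior_Cs] at this
      exact absurd (this hUne.choose_spec) (Set.notMem_empty _)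
    · have hsub : f '' (U ∩ Csᶜ) ⊆ {0} := by
        rintro _ ⟨z, ⟨_, hzc⟩, rfl⟩
        have : z ∉ As := fun h => hzc (As_subset_Cs h)
        simp [hf_val, this]
      have : (f '' (U ∩ Csᶜ)).Subsingleton := Set.Subsingleton.anti Set.subsingleton_singleton hsub
      rw [Metric.diam_subsingleton this]
      exact hε
  · -- ¬ Borel1 restrict
    rintro hB
    obtain ⟨F, hFcl, hFeq⟩ := hB (Set.Iio (1/2)) isOpen_Iio
    apply no_cover F hFcl
    rw [← hFeq]
    ext c
    simp only [Set.mem_setOf_eq, Set.mem_preimage, Set.restrict_apply, Set.mem_Iio]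
    exact (hpre _).symm
  · -- ¬ Borel1 f
    rintro hB
    obtain ⟨F, hFcl, hFeq⟩ := hB (Set.Iio (1/2)) isOpen_Iio
    apply no_cover (fun n => Subtype.val ⁻¹' F n)
      (fun n => (hFcl n).preimage continuous_subtype_val)
    ext c
    simp only [Set.mem_setOf_eq, Set.mem_iUnion, Set.mem_preimage]
    rw [← hpre, ← Set.mem_Iio, ← Set.mem_preimage, hFeq]
    exact Set.mem_iUnion
  · -- ¬ Fragmentable
    rintro hFr
    obtain ⟨U, hUo, hUCne, hdiam⟩ := hFr (1/2) (by norm_num) Cs isClosed_Cs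
      ⟨As_nonempty.choose, As_subset_Cs As_nonempty.choose_spec⟩
    obtain ⟨c, hcU, hcC⟩ := hUCne
    obtain ⟨ε, hε, hball⟩ := Metric.isOpen_iff.mp hUo c hcU
    obtain ⟨a, haA, hadist⟩ := dense_As c hcC ε hε
    obtain ⟨b, hbCA, hbdist⟩ := dense_Cs_diff_As c hcC ε hε
    have haU : a ∈ U ∩ Cs :=
      ⟨hball (by rw [Metric.mem_ball, Real.dist_eq, abs_sub_comm]; exact hadist), As_subset_Cs haA⟩
    have hbU : b ∈ U ∩ Cs :=
      ⟨hball (by rw [Metric.mem_ball, Real.dist_eq, abs_sub_comm]; exact hbdist), hbCA.1⟩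
    have hbounded : Bornology.IsBounded (f '' (U ∩ Cs)) := by
      apply Bornology.IsBounded.subset (Set.toFinite {(0:ℝ), 1}).isBounded
      rintro _ ⟨z, _, rfl⟩
      rw [hf_val]
      split <;> simp
    have h1 : dist (f a) (f b) ≤ Metric.diam (f '' (U ∩ Cs)) :=
      Metric.dist_le_diam_of_mem hbounded (Set.mem_image_of_mem f haU) (Set.mem_image_of_mem f hbU)
    have : dist (f a) (f b) = 1 := by
      rw [hf_val, hf_val, if_pos haA, if_neg hbCA.2, Real.dist_eq]
      norm_num
    linarith

end
end CliquishAux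

theorem exists_cliquish_not_borel1 :
    ∃ (f : ℝ → ℝ) (C : Set ℝ), IsClosed C ∧ Cliquish f ∧
      ¬ Borel1 (C.restrict f) ∧ ¬ Borel1 f ∧ ¬ Fragmentable f :=
  CliquishAux.exists_cliquish_not_borel1
end

section
/- Let X = ℚ with the subspace topology of ℝ, and let A, B ⊆ ℚ be disjoint sets each dense in ℚ. Then the characteristic function f = χ_A : ℚ → ℝ is weakly separated and Borel 1, but not fragmentable. -/
/-- Every subset of ℚ is Fσ. -/
lemma rat_isFSigma (s : Set ℚ) : IsFSigma s := by
  rcases s.eq_empty_or_nonempty with rfl | hne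
  · exact ⟨fun _ => ∅, fun _ => isClosed_empty, by simp⟩
  · obtain ⟨f, hf⟩ := (Set.to_countable s).exists_eq_range hne
    exact ⟨fun n => {f n}, fun n => isClosed_singleton, by
      rw [hf, ← Set.iUnion_singleton_eq_range]⟩

lemma rat_weaklySeparated (f : ℚ → ℝ) : WeaklySeparated f := by
  intro ε hε
  refine ⟨fun x => {y | y = x ∨ Encodable.encode x < Encodable.encode y}, ?_, ?_⟩
  · intro x
    constructor
    · rw [← isClosed_compl_iff]
      have : {y : ℚ | y = x ∨ Encodable.encode x < Encodable.encode y}ᶜ ⊆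
          (fun y : ℚ => Encodable.encode y) ⁻¹' (Set.Iic (Encodable.encode x)) := by
        intro y hy
        simp only [Set.mem_compl_iff, Set.mem_setOf_eq, not_or, not_lt] at hy
        exact hy.2
      refine Set.Finite.isClosed (Set.Finite.subset ?_ this)
      exact Set.Finite.preimage (Set.injOn_of_injective Encodable.encode_injective)
        (Set.finite_Iic _)
    · exact Or.inl rfl
  · intro x y hxy hyx
    rcases hxy with rfl | h1
    · simpa using hε
    rcases hyx with rfl | h2
    · simpa using hε
    exact absurd (h1.trans h2) (lt_irrefl _)

theorem rat_indicator_weaklySeparated_borel1_not_fragmentable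
    (A B : Set ℚ) (hAB : Disjoint A B) (hA : Dense A) (hB : Dense B) :
    WeaklySeparated (A.indicator (fun _ => (1 : ℝ))) ∧
    Borel1 (A.indicator (fun _ => (1 : ℝ))) ∧
    ¬ Fragmentable (A.indicator (fun _ => (1 : ℝ))) := by
  refine ⟨rat_weaklySeparated _, fun V _ => rat_isFSigma _, ?_⟩
  intro hfrag
  obtain ⟨U, hUopen, hUne, hUdiam⟩ :=
    hfrag (1/2) (by norm_num) Set.univ isClosed_univ ⟨0, trivial⟩
  rw [Set.inter_univ] at hUne hUdiam
  obtain ⟨a, haA, haU⟩ := hA.exists_mem_open hUopen hUne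
  obtain ⟨b, hbB, hbU⟩ := hB.exists_mem_open hUopen hUne
  have hbA : b ∉ A := fun h => hAB.ne_of_mem h hbB rfl
  set f := A.indicator (fun _ => (1 : ℝ))
  have hfa : f a = 1 := Set.indicator_of_mem haA _
  have hfb : f b = 0 := Set.indicator_of_notMem hbA _
  have hbdd : Bornology.IsBounded (f '' U) := by
    refine ((Set.finite_singleton (1:ℝ)).insert 0).isBounded.subset ?_
    rintro _ ⟨x, -, rfl⟩
    by_cases hx : x ∈ A
    · simp [f, Set.indicator_of_mem hx]
    · simp [f, Set.indicator_of_notMem hx]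
  have h1 : dist (f a) (f b) ≤ Metric.diam (f '' U) :=
    Metric.dist_le_diam_of_mem hbdd ⟨a, haU, rfl⟩ ⟨b, hbU, rfl⟩
  rw [hfa, hfb] at h1
  simp only [Real.dist_eq, sub_zero, abs_one] at h1
  linarith
end

section
/- Let X be the Sorgenfrey line and f = χ_ℚ : X → ℝ. Then f is weakly separated (indeed every function on the Sorgenfrey line into a metric space is weakly separated), but f is not Borel 1, since ℚ is not a G_δ subset of X. -/
/-- The Sorgenfrey topology on ℝ, generated by half-open intervals `[a, b)`. -/
def sorgenfreyTopology : TopologicalSpace ℝ :=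
  TopologicalSpace.generateFrom {s : Set ℝ | ∃ a b : ℝ, s = Set.Ico a b}

/-- A neighborhood assignment for a topology `t`. -/
def NbhdAssignmentT {X : Type*} (t : TopologicalSpace X) (V : X → Set X) : Prop :=
  ∀ x, t.IsOpen (V x) ∧ x ∈ V x

/-- Weak separation with respect to a topology `t` on the domain. -/
def WeaklySeparatedT {X Y : Type*} (t : TopologicalSpace X) [MetricSpace Y] (f : X → Y) : Prop :=
  ∀ ε > (0 : ℝ), ∃ V : X → Set X, NbhdAssignmentT t V ∧
    ∀ x y, x ∈ V y → y ∈ V x → dist (f x) (f y) < ε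

/-- Fσ with respect to a topology `t`. -/
def IsFSigmaT {X : Type*} (t : TopologicalSpace X) (s : Set X) : Prop :=
  ∃ F : ℕ → Set X, (∀ n, t.IsOpen (F n)ᶜ) ∧ s = ⋃ n, F n

/-- Borel 1 with respect to a topology `t` on the domain. -/
def Borel1T {X Y : Type*} (t : TopologicalSpace X) [TopologicalSpace Y] (f : X → Y) : Prop :=
  ∀ V : Set Y, IsOpen V → IsFSigmaT t (f ⁻¹' V)

/-- Gδ with respect to a topology `t`. -/
def IsGdeltaT {X : Type*} (t : TopologicalSpace X) (s : Set X) : Prop :=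
  ∃ U : ℕ → Set X, (∀ n, t.IsOpen (U n)) ∧ s = ⋂ n, U n

lemma sorg_loc' {U : Set ℝ}
    (hU : TopologicalSpace.GenerateOpen {s : Set ℝ | ∃ a b : ℝ, s = Set.Ico a b} U) :
    ∀ x ∈ U, ∃ ε > 0, Set.Ico x (x + ε) ⊆ U := by
  induction hU with
  | basic s hs =>
    obtain ⟨a, b, rfl⟩ := hs
    intro x hx
    exact ⟨b - x, by linarith [hx.2], fun y hy => ⟨le_trans hx.1 hy.1, by linarith [hy.2]⟩⟩
  | univ => exact fun x _ => ⟨1, one_pos, fun _ _ => trivial⟩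
  | inter s t _ _ ihs iht =>
    intro x hx
    obtain ⟨ε1, h1, hs1⟩ := ihs x hx.1
    obtain ⟨ε2, h2, hs2⟩ := iht x hx.2
    refine ⟨min ε1 ε2, lt_min h1 h2, fun y hy => ⟨hs1 ⟨hy.1, ?_⟩, hs2 ⟨hy.1, ?_⟩⟩⟩
    · have := hy.2; have := min_le_left ε1 ε2; linarith
    · have := hy.2; have := min_le_right ε1 ε2; linarith
  | sUnion S _ ih =>
    intro x hx
    obtain ⟨s, hsS, hxs⟩ := hx
    obtain ⟨ε, hε, h⟩ := ih s hsS x hxs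
    exact ⟨ε, hε, fun y hy => Set.mem_sUnion.2 ⟨s, hsS, h hy⟩⟩

lemma sorg_loc {U : Set ℝ} (hU : sorgenfreyTopology.IsOpen U) :
    ∀ x ∈ U, ∃ ε > 0, Set.Ico x (x + ε) ⊆ U := sorg_loc' hU

lemma sorg_Ici (x : ℝ) : sorgenfreyTopology.IsOpen (Set.Ici x) := by
  have h : Set.Ici x = ⋃₀ (Set.range (fun n : ℕ => Set.Ico x (x + (n + 1)))) := by
    rw [Set.sUnion_range]
    ext y
    simp only [Set.mem_Ici, Set.mem_iUnion, Set.mem_Ico]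
    constructor
    · intro hy
      obtain ⟨n, hn⟩ := exists_nat_gt (y - x)
      exact ⟨n, hy, by push_cast; linarith⟩
    · rintro ⟨n, h, _⟩; exact h
  rw [h]
  refine sorgenfreyTopology.isOpen_sUnion _ (by
    rintro s ⟨n, rfl⟩
    exact TopologicalSpace.GenerateOpen.basic _ ⟨x, x + (n + 1), rfl⟩)

theorem sorgenfrey_weaklySeparated_not_borel1 :
    (∀ (Y : Type) [MetricSpace Y] (g : ℝ → Y), WeaklySeparatedT sorgenfreyTopology g) ∧
    ¬ Borel1T sorgenfreyTopology ((Set.range ((↑) : ℚ → ℝ)).indicator (fun _ => (1 : ℝ))) ∧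
    ¬ IsGdeltaT sorgenfreyTopology (Set.range ((↑) : ℚ → ℝ)) := by
  have hGd : ¬ IsGdeltaT sorgenfreyTopology (Set.range ((↑) : ℚ → ℝ)) := by
    rintro ⟨U, hUo, hUeq⟩
    set D : ℕ ⊕ ℚ → Set ℝ :=
      fun i => Sum.elim (fun n => interior (U n)) (fun q => {(q : ℝ)}ᶜ) i with hD
    have hDo : ∀ i, IsOpen (D i) := by
      rintro (n | q)
      · exact isOpen_interior
      · exact isOpen_compl_singleton
    have hDd : ∀ i, Dense (D i) := by
      rintro (n | q)
      · rw [dense_iff_inter_open]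
        intro W hW hWne
        obtain ⟨x, hx⟩ := hWne
        obtain ⟨δ, hδ, hball⟩ := Metric.isOpen_iff.1 hW x hx
        obtain ⟨q, hq1, hq2⟩ := exists_rat_btwn (show x < x + δ by linarith)
        have hqU : (q : ℝ) ∈ U n := by
          have : (q : ℝ) ∈ ⋂ n, U n := hUeq ▸ ⟨q, rfl⟩
          exact Set.mem_iInter.1 this n
        obtain ⟨ε, hε, hsub⟩ := sorg_loc (hUo n) _ hqU
        obtain ⟨y, hy1, hy2⟩ :=
          exists_between (lt_min hq2 (show (q : ℝ) < q + ε by linarith))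
        refine ⟨y, ?_, ?_⟩
        · apply hball
          rw [Metric.mem_ball, Real.dist_eq, abs_lt]
          have hyb : y < x + δ := lt_of_lt_of_le hy2 (min_le_left _ _)
          constructor <;> linarith
        · exact interior_maximal (Set.Ioo_subset_Ico_self.trans hsub) isOpen_Ioo
            ⟨hy1, lt_of_lt_of_le hy2 (min_le_right _ _)⟩
      · exact dense_compl_singleton _
    obtain ⟨x, hx⟩ := (dense_iInter_of_isOpen hDo hDd).nonempty
    have hxU : x ∈ Set.range ((↑) : ℚ → ℝ) := by
      rw [hUeq]
      exact Set.mem_iInter.2 fun n => interior_subset (Set.mem_iInter.1 hx (Sum.inl n))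
    obtain ⟨q, rfl⟩ := hxU
    exact (Set.mem_iInter.1 hx (Sum.inr q)) rfl
  refine ⟨?_, ?_, hGd⟩
  · intro Y _ g ε hε
    refine ⟨fun x => Set.Ici x, fun x => ⟨sorg_Ici x, Set.self_mem_Ici⟩, ?_⟩
    intro x y hxy hyx
    have hxy' : x = y := le_antisymm hyx hxy
    simp [hxy', hε]
  · intro hB
    obtain ⟨F, hFc, hFeq⟩ := hB (Set.Iio (1 / 2)) isOpen_Iio
    apply hGd
    refine ⟨fun n => (F n)ᶜ, hFc, ?_⟩
    have hpre : (Set.range ((↑) : ℚ → ℝ)).indicator (fun _ => (1 : ℝ)) ⁻¹' Set.Iio (1 / 2)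
        = (Set.range ((↑) : ℚ → ℝ))ᶜ := by
      ext x
      by_cases hx : x ∈ Set.range ((↑) : ℚ → ℝ) <;>
        simp [Set.indicator_apply, hx] <;> norm_num
    rw [← Set.compl_iUnion, ← hFeq, hpre, compl_compl]
end
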